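/- arXiv:1003.2135 — 4 statements merged into one kernel-verified Lean document; each statement's English description precedes it below -/
import Mathlib

section
/- Let 𝔬 be a complete discrete valuation ring with fraction field F, let V be a finite-dimensional F-vector space, let T : V → V be an invertible linear transformation all of whose slopes are strictly positive, and let Λ be an 𝔬-lattice in V with TΛ ⊆ Λ. Then 1 − T maps Λ bijectively onto Λ. In particular, if v ∈ V satisfies v − Tv ∈ Λ, then v ∈ Λ. -/
/-!
Lift the characteristic polynomial of `T` to a polynomial `P` over `𝔬`. Its nonleading
coefficients lie in the maximal ideal, so `P(1) ≡ 1` is a unit, and writing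
`P = P(1) + (X - 1) G` shows, by Cayley–Hamilton, that `(1 - T)⁻¹ = P(1)⁻¹ G(T)`:
a polynomial in `T` with coefficients in `𝔬`, which therefore preserves `Λ`.
-/

open IsLocalRing Polynomial

namespace Polynomial

theorem one_sub_X_mul_divByMonic_X_sub_one {R : Type*} [CommRing R] (Q : R[X]) :
    (1 - X) * (Q /ₘ (X - C 1)) = C (Q.eval 1) - Q := by
  have h := modByMonic_add_div Q (X - C 1)
  rw [modByMonic_X_sub_C_eq_C_eval] at h
  simp only [C_1] at h ⊢
  linear_combination -h

theorem Monic.exists_map_eq_isUnit_eval_one {R S : Type*} [CommRing R] [IsLocalRing R]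
    [CommRing S] (f : R →+* S) {p : S[X]} (hp : p.Monic)
    (h : ∀ i < p.natDegree, p.coeff i ∈ f '' (maximalIdeal R : Set R)) :
    ∃ P : R[X], P.map f = p ∧ IsUnit (P.eval 1) := by
  choose a ha hfa using fun i : Fin p.natDegree => h i i.isLt
  refine ⟨X ^ p.natDegree + ∑ i, C (a i) * X ^ (i : ℕ), ?_, ?_⟩
  · conv_rhs => rw [hp.as_sum]
    simp [Polynomial.map_sum, hfa, Fin.sum_univ_eq_sum_range (fun i => C (p.coeff i) * X ^ i)]
  · have hsum : ∑ i, a i ∈ maximalIdeal R := Ideal.sum_mem _ fun i _ => ha i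
    rw [← notMem_maximalIdeal]
    intro hmem
    apply (maximalIdeal.isMaximal R).ne_top
    rw [Ideal.eq_top_iff_one]
    simpa [eval_finsetSum] using Ideal.sub_mem _ hmem hsum

theorem exists_aeval_mul_one_sub_eq_one {R A : Type*} [CommRing R] [Ring A] [Algebra R A]
    {a : A} {Q : R[X]} (hQ : aeval a Q = 0) (hu : IsUnit (Q.eval 1)) :
    ∃ G : R[X], (1 - a) * aeval a G = 1 ∧ aeval a G * (1 - a) = 1 := by
  set G := C (↑hu.unit⁻¹ : R) * (Q /ₘ (X - C 1))
  have key : (1 - X) * G = 1 - C (↑hu.unit⁻¹ : R) * Q := by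
    rw [mul_left_comm, one_sub_X_mul_divByMonic_X_sub_one, mul_sub, ← C_mul,
      IsUnit.val_inv_mul, C_1]
  refine ⟨G, ?_, ?_⟩
  · simpa [hQ] using congrArg (aeval a) key
  · simpa [hQ] using congrArg (aeval a) ((mul_comm _ _).trans key)

end Polynomial

theorem one_sub_bijOn_lattice_general
    (O : Type*) [CommRing O] [IsDomain O] [IsDiscreteValuationRing O]
    (F : Type*) [Field F] [Algebra O F]
    (V : Type*) [AddCommGroup V] [Module F V] [FiniteDimensional F V]
    [Module O V] [IsScalarTower O F V]
    (T : V →ₗ[F] V)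
    (hslope : ∀ i < Module.finrank F V,
      (LinearMap.charpoly T).coeff i ∈ algebraMap O F '' (maximalIdeal O : Set O))
    (Λ : Submodule O V)
    (hTΛ : ∀ x ∈ Λ, T x ∈ Λ) :
    Set.BijOn (⇑((1 : V →ₗ[F] V) - T)) (Λ : Set V) (Λ : Set V) ∧
    ∀ v : V, v - T v ∈ Λ → v ∈ Λ := by
  obtain ⟨P, hPmap, hunit⟩ := (LinearMap.charpoly_monic T).exists_map_eq_isUnit_eval_one
    (algebraMap O F) (by rwa [LinearMap.charpoly_natDegree])
  have hP : aeval T P = 0 := by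
    rw [← aeval_map_algebraMap F, hPmap, LinearMap.aeval_self_charpoly]
  obtain ⟨G, hright, hleft⟩ := exists_aeval_mul_one_sub_eq_one hP hunit
  have hGΛ : Set.MapsTo (aeval T G) Λ Λ := fun x hx =>
    aeval_apply_smul_mem_of_le_comap' hx G T hTΛ
  have hG : ∀ v, aeval T G ((1 - T) v) = v := fun v => LinearMap.congr_fun hleft v
  have hmaps : Set.MapsTo (⇑((1 : V →ₗ[F] V) - T)) Λ Λ := fun x hx => Λ.sub_mem hx (hTΛ x hx)
  refine ⟨Set.InvOn.bijOn ⟨fun v _ => hG v, fun v _ => LinearMap.congr_fun hright v⟩ hmaps hGΛ,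
    fun v hv => hG v ▸ hGΛ hv⟩

/-- If `T` is an invertible endomorphism of a finite-dimensional vector space
over the fraction field of a complete discrete valuation ring, all of whose
slopes are strictly positive (equivalently, all nonleading coefficients of the
characteristic polynomial lie in the maximal ideal), and `Λ` is a lattice with
`TΛ ⊆ Λ`, then `1 − T` maps `Λ` bijectively onto `Λ`; in particular
`v − Tv ∈ Λ` implies `v ∈ Λ`. -/
theorem one_sub_bijOn_lattice
    (O : Type*) [CommRing O] [IsDomain O] [IsDiscreteValuationRing O]
    [IsAdicComplete (maximalIdeal O) O]
    (F : Type*) [Field F] [Algebra O F] [IsFractionRing O F]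
    (V : Type*) [AddCommGroup V] [Module F V] [FiniteDimensional F V]
    [Module O V] [IsScalarTower O F V]
    (T : V →ₗ[F] V) (hT : Function.Bijective T)
    (hslope : ∀ i < Module.finrank F V,
      (LinearMap.charpoly T).coeff i ∈ algebraMap O F '' (maximalIdeal O : Set O))
    (Λ : Submodule O V) (hfg : Λ.FG)
    (hfull : Submodule.span F (Λ : Set V) = ⊤)
    (hTΛ : ∀ x ∈ Λ, T x ∈ Λ) :
    Set.BijOn (⇑((1 : V →ₗ[F] V) - T)) (Λ : Set V) (Λ : Set V) ∧
    ∀ v : V, v - T v ∈ Λ → v ∈ Λ :=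
  one_sub_bijOn_lattice_general O F V T hslope Λ hTΛ
end

section
/- Let 𝔬 be a complete discrete valuation ring with fraction field F and uniformizer ϖ, let Λ be a lattice in an n-dimensional F-vector space V, let i ∈ {1,...,n} and a ∈ ℤ. Then the subset {T ∈ End_F(V) : μ₁(T,Λ) + ... + μ_i(T,Λ) ≥ a} is both open and closed in End_F(V), and likewise the subset where μ₁(T,Λ) + ... + μ_i(T,Λ) = a is both open and closed. -/
/-! Clearing denominators, `ϖ^m • [T]` is the image of an integral matrix `B`, and an `i × i`
minor of `T` lies in `ϖ^ℓ 𝔬` iff `ϖ^(ℓ + m i)` divides the corresponding minor of `B`. If `T'` is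
`ϖ^N`-close to `T`, its integral matrix `B'` is congruent to `B` modulo `ϖ^(N + m)`; minors are
integral polynomials in the entries, so the minors of `B'` and `B` are congruent too. For
`N ≥ ℓ + m i` this makes membership in `{μ₁ + ⋯ + μ_i ≥ ℓ}` locally constant, so these loci are
clopen, and the locus `μ₁ + ⋯ + μ_i = a` is a Boolean combination of two of them. -/

open IsLocalRing

variable (O : Type*) [CommRing O] [IsDomain O] [IsDiscreteValuationRing O]
variable (F : Type*) [Field F] [Algebra O F] [IsFractionRing O F]

/-- `x` and `y` differ by an element of `ϖ^a 𝔬 ⊆ F`. -/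
def entryClose (ϖ : O) (a : ℤ) (x y : F) : Prop :=
  ∃ c : O, x - y = (algebraMap O F ϖ) ^ a * algebraMap O F c

variable (V : Type*) [AddCommGroup V] [Module F V] (n : ℕ)

/-- Openness of a subset of `End_F V` in the natural (`ϖ`-adic) topology,
expressed through matrix entries with respect to a basis `b`. -/
def AdicOpen (ϖ : O) (b : Module.Basis (Fin n) F V) (S : Set (V →ₗ[F] V)) : Prop :=
  ∀ T ∈ S, ∃ a : ℤ, ∀ T' : V →ₗ[F] V,
    (∀ i j : Fin n, entryClose O F ϖ a (LinearMap.toMatrix b b T' i j)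
      (LinearMap.toMatrix b b T i j)) → T' ∈ S

/-- The set of endomorphisms `T` with `μ₁(T,Λ)+⋯+μ_i(T,Λ) ≥ a`, where `Λ` is
the lattice spanned by the basis `b`: equivalently, every `i×i` minor of the
matrix of `T` in the basis `b` lies in `ϖ^a 𝔬`. -/
def HodgeSumGE (ϖ : O) (b : Module.Basis (Fin n) F V) (i : ℕ) (a : ℤ) :
    Set (V →ₗ[F] V) :=
  {T | ∀ ρ σ : Fin i → Fin n,
    ∃ c : O, ((LinearMap.toMatrix b b T).submatrix ρ σ).det =
      (algebraMap O F ϖ) ^ a * algebraMap O F c}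

theorem Matrix.dvd_det_sub_det_of_forall_dvd_sub {R ι : Type*} [CommRing R] [Fintype ι]
    [DecidableEq ι] {x : R} {B B' : Matrix ι ι R} (h : ∀ p q, x ∣ B' p q - B p q) :
    x ∣ B'.det - B.det := by
  let mk := Ideal.Quotient.mk (Ideal.span {x})
  have hmap : mk.mapMatrix B' = mk.mapMatrix B := by
    ext p q
    exact Ideal.Quotient.eq.mpr (Ideal.mem_span_singleton.mpr (h p q))
  rw [← Ideal.mem_span_singleton, ← Ideal.Quotient.eq, RingHom.map_det, RingHom.map_det, hmap]

theorem Matrix.algebraMap_det_of_map_eq_smul {R K ι : Type*} [CommRing R] [CommRing K]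
    [Algebra R K] [Fintype ι] [DecidableEq ι] {B : Matrix ι ι R} {A : Matrix ι ι K} {c : K}
    (h : B.map (algebraMap R K) = c • A) :
    algebraMap R K B.det = c ^ Fintype.card ι * A.det := by
  rw [RingHom.map_det, RingHom.mapMatrix_apply, h, Matrix.det_smul]

theorem exists_eq_zpow_mul_algebraMap_iff_of_eq_zpow_mul {R K : Type*} [CommRing R] [Field K]
    [Algebra R K] {π x z : K} (hπ : π ≠ 0) (k ℓ : ℤ) (hz : z = π ^ k * x) :
    (∃ c : R, x = π ^ ℓ * algebraMap R K c) ↔ ∃ c : R, z = π ^ (ℓ + k) * algebraMap R K c := by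
  refine exists_congr fun c => ?_
  rw [hz, zpow_add₀ hπ, mul_right_comm, mul_comm _ (π ^ k), mul_right_inj' (zpow_ne_zero k hπ)]

theorem exists_algebraMap_eq_zpow_mul_iff_dvd {R K : Type*} [CommRing R] [IsDomain R] [Field K]
    [Algebra R K] [IsFractionRing R K] {ϖ : R} (hϖ : ϖ ≠ 0) (y : R) (j : ℤ) :
    (∃ c : R, algebraMap R K y = algebraMap R K ϖ ^ j * algebraMap R K c) ↔
      ϖ ^ j.toNat ∣ y := by
  rcases le_or_gt 0 j with hj | hj
  · lift j to ℕ using hj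
    simp only [zpow_natCast, Int.toNat_natCast, ← map_pow, ← map_mul,
      (IsFractionRing.injective R K).eq_iff]
    rfl
  · have hπ : algebraMap R K ϖ ≠ 0 := (map_ne_zero_iff _ (IsFractionRing.injective R K)).mpr hϖ
    simp only [Int.toNat_of_nonpos hj.le, pow_zero, one_dvd, iff_true]
    refine ⟨ϖ ^ (-j).toNat * y, ?_⟩
    rw [map_mul, map_pow, ← zpow_natCast, Int.toNat_of_nonneg (by omega), ← mul_assoc,
      ← zpow_add₀ hπ, add_neg_cancel, zpow_zero, one_mul]

section
variable {O F}

theorem exists_map_eq_pow_smul {ι κ : Type*} [Finite ι] [Finite κ] {ϖ : O}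
    (hϖ : Irreducible ϖ) (A : Matrix ι κ F) :
    ∃ (m : ℕ) (B : Matrix ι κ O), B.map (algebraMap O F) = algebraMap O F ϖ ^ m • A := by
  obtain ⟨s, hs⟩ := IsLocalization.exist_integer_multiples_of_finite (nonZeroDivisors O)
    fun pq : ι × κ => A pq.1 pq.2
  obtain ⟨m, u, hu⟩ :=
    IsDiscreteValuationRing.eq_unit_mul_pow_irreducible (nonZeroDivisors.ne_zero s.2) hϖ
  choose B hB using fun p q => hs (p, q)
  refine ⟨m, Matrix.of fun p q => ↑u⁻¹ * B p q, ?_⟩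
  ext p q
  rw [Matrix.map_apply, Matrix.of_apply, Matrix.smul_apply, map_mul, hB p q, Algebra.smul_def,
    hu, ← mul_assoc, ← map_mul, ← mul_assoc, Units.inv_mul, one_mul, map_pow, smul_eq_mul]

end

section
variable {R K W : Type*} [CommRing R] [Field K] [Algebra R K] [AddCommGroup W] [Module K W]
  {d : ℕ} {ϖ : R}

theorem exists_map_eq_pow_smul_of_entryClose {ι κ : Type*} {m N : ℕ} {A A' : Matrix ι κ K}
    {B : Matrix ι κ R} (hB : B.map (algebraMap R K) = algebraMap R K ϖ ^ m • A)
    (hA' : ∀ p q, entryClose R K ϖ N (A' p q) (A p q)) :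
    ∃ B' : Matrix ι κ R, B'.map (algebraMap R K) = algebraMap R K ϖ ^ m • A' ∧
      ∀ p q, ϖ ^ (m + N) ∣ B' p q - B p q := by
  choose C hC using hA'
  refine ⟨B + ϖ ^ (m + N) • Matrix.of C, ?_, fun p q => ⟨C p q, by simp⟩⟩
  ext p q
  have hBpq := congrFun (congrFun hB p) q
  have hCpq := hC p q
  simp only [Matrix.map_apply, Matrix.add_apply, Matrix.smul_apply, Matrix.of_apply, smul_eq_mul,
    map_add, map_mul, map_pow, zpow_natCast] at hBpq hCpq ⊢
  linear_combination hBpq - algebraMap R K ϖ ^ m * hCpq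

theorem entryClose_of_le (hϖ : algebraMap R K ϖ ≠ 0) {a a' : ℤ} (h : a' ≤ a) {x y : K}
    (hxy : entryClose R K ϖ a x y) : entryClose R K ϖ a' x y := by
  obtain ⟨c, hc⟩ := hxy
  obtain ⟨k, rfl⟩ : ∃ k : ℕ, a = a' + k := ⟨(a - a').toNat, by omega⟩
  refine ⟨ϖ ^ k * c, ?_⟩
  rw [hc, zpow_add₀ hϖ, zpow_natCast, map_mul, map_pow, mul_assoc]

theorem AdicOpen.inter (hϖ : algebraMap R K ϖ ≠ 0) {b : Module.Basis (Fin d) K W}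
    {S S' : Set (W →ₗ[K] W)} (hS : AdicOpen R K W d ϖ b S) (hS' : AdicOpen R K W d ϖ b S') :
    AdicOpen R K W d ϖ b (S ∩ S') := by
  rintro T ⟨hTS, hTS'⟩
  obtain ⟨a, ha⟩ := hS T hTS
  obtain ⟨a', ha'⟩ := hS' T hTS'
  exact ⟨max a a', fun T' hT' =>
    ⟨ha T' fun p q => entryClose_of_le hϖ (le_max_left a a') (hT' p q),
      ha' T' fun p q => entryClose_of_le hϖ (le_max_right a a') (hT' p q)⟩⟩

theorem AdicOpen.union {b : Module.Basis (Fin d) K W} {S S' : Set (W →ₗ[K] W)}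
    (hS : AdicOpen R K W d ϖ b S) (hS' : AdicOpen R K W d ϖ b S') :
    AdicOpen R K W d ϖ b (S ∪ S') := by
  rintro T (hT | hT)
  · obtain ⟨a, ha⟩ := hS T hT
    exact ⟨a, fun T' hT' => Or.inl (ha T' hT')⟩
  · obtain ⟨a, ha⟩ := hS' T hT
    exact ⟨a, fun T' hT' => Or.inr (ha T' hT')⟩

theorem adicOpen_and_adicOpen_compl_of_mem_iff {b : Module.Basis (Fin d) K W}
    {S : Set (W →ₗ[K] W)}
    (h : ∀ T, ∃ N : ℤ, ∀ T', (∀ p q, entryClose R K ϖ N (LinearMap.toMatrix b b T' p q)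
      (LinearMap.toMatrix b b T p q)) → (T' ∈ S ↔ T ∈ S)) :
    AdicOpen R K W d ϖ b S ∧ AdicOpen R K W d ϖ b Sᶜ := by
  refine ⟨fun T hT => ?_, fun T hT => ?_⟩ <;> obtain ⟨N, hN⟩ := h T
  exacts [⟨N, fun T' hT' => (hN T' hT').2 hT⟩, ⟨N, fun T' hT' => mt (hN T' hT').1 hT⟩]

theorem mem_hodgeSumGE_iff_forall_pow_dvd_det [IsDomain R] [IsFractionRing R K] (hϖ : ϖ ≠ 0)
    {b : Module.Basis (Fin d) K W} {i : ℕ} {ℓ : ℤ} {T : W →ₗ[K] W} {m : ℕ}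
    {B : Matrix (Fin d) (Fin d) R}
    (hB : B.map (algebraMap R K) = algebraMap R K ϖ ^ m • LinearMap.toMatrix b b T) :
    T ∈ HodgeSumGE R K W d ϖ b i ℓ ↔
      ∀ ρ σ : Fin i → Fin d, ϖ ^ (ℓ + (m * i : ℕ)).toNat ∣ (B.submatrix ρ σ).det := by
  have hπ : algebraMap R K ϖ ≠ 0 := (map_ne_zero_iff _ (IsFractionRing.injective R K)).mpr hϖ
  refine forall₂_congr fun ρ σ => ?_
  have hmap : (B.submatrix ρ σ).map (algebraMap R K) =
      algebraMap R K ϖ ^ m • (LinearMap.toMatrix b b T).submatrix ρ σ := by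
    rw [← Matrix.submatrix_map, hB]
    rfl
  have hminor : algebraMap R K (B.submatrix ρ σ).det = algebraMap R K ϖ ^ ((m * i : ℕ) : ℤ) *
      ((LinearMap.toMatrix b b T).submatrix ρ σ).det := by
    rw [Matrix.algebraMap_det_of_map_eq_smul hmap, Fintype.card_fin, ← pow_mul, zpow_natCast]
  rw [exists_eq_zpow_mul_algebraMap_iff_of_eq_zpow_mul hπ _ _ hminor,
    exists_algebraMap_eq_zpow_mul_iff_dvd hϖ]

end

section
variable {O F V n}

theorem exists_forall_entryClose_mem_hodgeSumGE_iff {ϖ : O} (hϖ : Irreducible ϖ)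
    (b : Module.Basis (Fin n) F V) (i : ℕ) (ℓ : ℤ) (T : V →ₗ[F] V) :
    ∃ N : ℤ, ∀ T' : V →ₗ[F] V, (∀ p q, entryClose O F ϖ N (LinearMap.toMatrix b b T' p q)
      (LinearMap.toMatrix b b T p q)) →
      (T' ∈ HodgeSumGE O F V n ϖ b i ℓ ↔ T ∈ HodgeSumGE O F V n ϖ b i ℓ) := by
  obtain ⟨m, B, hB⟩ := exists_map_eq_pow_smul hϖ (LinearMap.toMatrix b b T)
  refine ⟨(ℓ + (m * i : ℕ)).toNat, fun T' hT' => ?_⟩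
  obtain ⟨B', hB', hBB'⟩ := exists_map_eq_pow_smul_of_entryClose hB hT'
  rw [mem_hodgeSumGE_iff_forall_pow_dvd_det hϖ.ne_zero hB',
    mem_hodgeSumGE_iff_forall_pow_dvd_det hϖ.ne_zero hB]
  refine forall₂_congr fun ρ σ => dvd_iff_dvd_of_dvd_sub ?_
  exact (pow_dvd_pow ϖ (Nat.le_add_left _ m)).trans
    (Matrix.dvd_det_sub_det_of_forall_dvd_sub fun p q => hBB' (ρ p) (σ q))

end

theorem hodge_loci_clopen
    (ϖ : O) (hϖ : Irreducible ϖ) (b : Module.Basis (Fin n) F V)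
    (i : ℕ) (a : ℤ) :
    AdicOpen O F V n ϖ b (HodgeSumGE O F V n ϖ b i a) ∧
    AdicOpen O F V n ϖ b (HodgeSumGE O F V n ϖ b i a)ᶜ ∧
    AdicOpen O F V n ϖ b
      (HodgeSumGE O F V n ϖ b i a \ HodgeSumGE O F V n ϖ b i (a + 1)) ∧
    AdicOpen O F V n ϖ b
      (HodgeSumGE O F V n ϖ b i a \ HodgeSumGE O F V n ϖ b i (a + 1))ᶜ := by
  have hπ : algebraMap O F ϖ ≠ 0 :=
    (map_ne_zero_iff _ (IsFractionRing.injective O F)).mpr hϖ.ne_zero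
  have clopen (ℓ : ℤ) := adicOpen_and_adicOpen_compl_of_mem_iff
    (exists_forall_entryClose_mem_hodgeSumGE_iff hϖ b i ℓ)
  obtain ⟨hGE, hLT⟩ := clopen a
  obtain ⟨hGE', hLT'⟩ := clopen (a + 1)
  refine ⟨hGE, hLT, ?_, ?_⟩
  · rw [Set.sdiff_eq]
    exact hGE.inter hπ hLT'
  · rw [Set.compl_sdiff]
    exact hGE'.union hLT
end

section
/- Let r : R → ℤ be a non-archimedean function on a root system R, and let α, β, γ ∈ R be three roots, one of which is the sum of the other two. Then: (1) α, β, γ are pairwise non-strongly-orthogonal; (2) r(α) + r(β) − r(γ) ≤ max{r(α), r(β), r(γ)}; (3) max{r(α), r(β), r(γ)} ≤ min{r_m(α), r_m(β), r_m(γ)}; (4) min{r_m(α), r_m(β), r_m(γ)} ≤ r_m(α) + r_m(β) − r_m(γ), where r_m(δ) = max{r(ε) : ε not strongly orthogonal to δ}. -/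
variable {V : Type*} [NormedAddCommGroup V] [InnerProductSpace ℝ V] [DecidableEq V]

/-- A (crystallographic) root system, encoded as a finite subset of a real inner
product space: it does not contain `0`, is symmetric, is stable under the
reflections in its elements, and satisfies the integrality condition. -/
def IsCrystRootSet (R : Finset V) : Prop :=
  (0 : V) ∉ R ∧ (∀ α ∈ R, -α ∈ R) ∧
  (∀ α ∈ R, ∀ β ∈ R, β - (2 * (inner ℝ β α : ℝ) / (inner ℝ α α : ℝ)) • α ∈ R) ∧
  (∀ α ∈ R, ∀ β ∈ R, ∃ z : ℤ, 2 * (inner ℝ β α : ℝ) = z * (inner ℝ α α : ℝ))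

/-- Two roots are strongly orthogonal if neither their sum nor their difference
lies in `R ∪ {0}`. -/
def StronglyOrthogonal (R : Finset V) (α β : V) : Prop :=
  α + β ∉ R ∧ α - β ∉ R ∧ α + β ≠ 0 ∧ α - β ≠ 0

instance (R : Finset V) (α β : V) : Decidable (StronglyOrthogonal R α β) :=
  inferInstanceAs (Decidable (α + β ∉ R ∧ α - β ∉ R ∧ α + β ≠ 0 ∧ α - β ≠ 0))

/-- `perp R S` is the set of roots strongly orthogonal to every root of `S`. -/
def perp (R : Finset V) (S : Finset V) : Finset V :=
  R.filter fun β => ∀ α ∈ S, StronglyOrthogonal R α β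

/-- A function `r : R → ℤ` on a root system is non-archimedean if it is even and
satisfies the ultrametric inequality. -/
def NonArch (R : Finset V) (r : V → ℤ) : Prop :=
  (∀ α ∈ R, r (-α) = r α) ∧
  ∀ α ∈ R, ∀ β ∈ R, α + β ∈ R → min (r α) (r β) ≤ r (α + β)

/-- `rm R r α` is the maximum of `r β` over the roots `β` not strongly
orthogonal to `α` (for `α ∈ R` this set contains `α` itself, so is nonempty). -/
def rm (R : Finset V) (r : V → ℤ) (α : V) : ℤ :=
  WithBot.unbotD (r α)
    (((R.filter fun β => ¬ StronglyOrthogonal R α β).image r).max)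

/-!
Parts (2) and (4) only need `min (f α) (f β) ≤ f γ` for `f = r` and for `f = -rm`, and this
holds for every non-archimedean `f` because `γ = ±α ± β`. That `-rm` is non-archimedean comes
from the root system: a root `ε` strongly orthogonal to `α` and `β` is strongly orthogonal to
`α + β`. Indeed strongly orthogonal roots are orthogonal, and if `η = α + β ± ε` lay in
`R ∪ {0}`, one of `⟪η, α⟫`, `⟪η, β⟫` would be positive (they add up to `‖α + β‖²`), which
puts `η - α = β ± ε` or `η - β = α ± ε` in `R ∪ {0}`. Part (3) holds because none of the
three roots is strongly orthogonal to another, so each `r` value is bounded by each `rm` value.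
-/

open scoped RealInnerProductSpace

variable {E : Type*} [NormedAddCommGroup E]

lemma Int.eq_one_or_eq_one_or_eq_two_of_mul_le_four {n m : ℤ} (hn : 0 < n) (hm : 0 < m)
    (h : n * m ≤ 4) : n = 1 ∨ m = 1 ∨ n = 2 ∧ m = 2 := by
  have : n ≤ 4 := by nlinarith
  interval_cases n <;> omega

lemma stronglyOrthogonal_iff [DecidableEq E] {R : Finset E} {α β : E} :
    StronglyOrthogonal R α β ↔ α + β ∉ insert 0 R ∧ α - β ∉ insert 0 R := by
  simp only [StronglyOrthogonal, Finset.mem_insert, not_or]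
  tauto

lemma not_stronglyOrthogonal_self {R : Finset E} (α : E) : ¬ StronglyOrthogonal R α α :=
  fun h => h.2.2.2 (sub_self α)

lemma not_stronglyOrthogonal_of_add_mem {R : Finset E} {α β : E} (h : α + β ∈ R) :
    ¬ StronglyOrthogonal R α β :=
  fun hso => hso.1 h

lemma not_stronglyOrthogonal_of_sub_mem {R : Finset E} {α β : E} (h : α - β ∈ R) :
    ¬ StronglyOrthogonal R α β :=
  fun hso => hso.2.1 h

lemma StronglyOrthogonal.neg_right {R : Finset E} {α β : E} (h : StronglyOrthogonal R α β) :
    StronglyOrthogonal R α (-β) := by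
  rw [StronglyOrthogonal, ← sub_eq_add_neg, sub_neg_eq_add]
  exact ⟨h.2.1, h.1, h.2.2.2, h.2.2.1⟩

lemma StronglyOrthogonal.symm {R : Finset E} (hneg : ∀ x ∈ R, -x ∈ R) {α β : E}
    (h : StronglyOrthogonal R α β) : StronglyOrthogonal R β α := by
  refine ⟨add_comm α β ▸ h.1, fun hm => h.2.1 ?_, add_comm α β ▸ h.2.2.1, ?_⟩
  · simpa using hneg _ hm
  · rw [← neg_sub]
    exact neg_ne_zero.mpr h.2.2.2

lemma StronglyOrthogonal.neg_left {R : Finset E} (hneg : ∀ x ∈ R, -x ∈ R) {α β : E}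
    (h : StronglyOrthogonal R α β) : StronglyOrthogonal R (-α) β :=
  ((h.symm hneg).neg_right).symm hneg

lemma not_stronglyOrthogonal_of_sum {R : Finset E} (hneg : ∀ x ∈ R, -x ∈ R) {α β γ : E}
    (hα : α ∈ R) (hβ : β ∈ R) (hγ : γ ∈ R) (hsum : γ = α + β ∨ α = β + γ ∨ β = α + γ) :
    ¬ StronglyOrthogonal R α β ∧ ¬ StronglyOrthogonal R α γ ∧ ¬ StronglyOrthogonal R β γ := by
  rcases hsum with rfl | rfl | rfl
  · exact ⟨not_stronglyOrthogonal_of_add_mem hγ,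
      not_stronglyOrthogonal_of_sub_mem (by simpa using hneg β hβ),
      not_stronglyOrthogonal_of_sub_mem (by simpa using hneg α hα)⟩
  · exact ⟨not_stronglyOrthogonal_of_sub_mem (by simpa using hγ),
      not_stronglyOrthogonal_of_sub_mem (by simpa using hβ),
      not_stronglyOrthogonal_of_add_mem hα⟩
  · exact ⟨not_stronglyOrthogonal_of_sub_mem (by simpa using hneg γ hγ),
      not_stronglyOrthogonal_of_add_mem hβ,
      not_stronglyOrthogonal_of_sub_mem (by simpa using hα)⟩

lemma NonArch.min_le_of_sum {R : Finset E} {f : E → ℤ} (hf : NonArch R f)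
    (hneg : ∀ x ∈ R, -x ∈ R) {α β γ : E} (hα : α ∈ R) (hβ : β ∈ R) (hγ : γ ∈ R)
    (hsum : γ = α + β ∨ α = β + γ ∨ β = α + γ) : min (f α) (f β) ≤ f γ := by
  rcases hsum with rfl | rfl | rfl
  · exact hf.2 α hα β hβ hγ
  · have := hf.2 _ hα (-β) (hneg β hβ) (by simpa using hγ)
    rwa [hf.1 β hβ, add_neg_cancel_comm] at this
  · have := hf.2 (-α) (hneg α hα) _ hβ (by simpa using hγ)
    rwa [hf.1 α hα, neg_add_cancel_left] at this

namespace IsCrystRootSet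

variable [InnerProductSpace ℝ E] {R : Finset E} {α β ε : E}

lemma inner_self_pos (hR : IsCrystRootSet R) (hα : α ∈ R) : 0 < ⟪α, α⟫ :=
  real_inner_self_pos.mpr fun h => hR.1 (h ▸ hα)

lemma sub_mem_of_two_inner_eq (hR : IsCrystRootSet R) (hα : α ∈ R) (hβ : β ∈ R)
    (h : 2 * ⟪β, α⟫ = ⟪α, α⟫) : β - α ∈ R := by
  have := hR.2.2.1 α hα β hβ
  rwa [h, div_self (hR.inner_self_pos hα).ne', one_smul] at this

variable [DecidableEq E]

lemma sub_mem_insert_zero_of_inner_pos (hR : IsCrystRootSet R) (hα : α ∈ R) (hβ : β ∈ R)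
    (h : 0 < ⟪α, β⟫) : α - β ∈ insert 0 R := by
  obtain ⟨n, hn⟩ := hR.2.2.2 β hβ α hα
  obtain ⟨m, hm⟩ := hR.2.2.2 α hα β hβ
  rw [real_inner_comm] at hm
  have ha := hR.inner_self_pos hα
  have hb := hR.inner_self_pos hβ
  have hn0 : 0 < n := by exact_mod_cast (show (0 : ℝ) < n by nlinarith)
  have hm0 : 0 < m := by exact_mod_cast (show (0 : ℝ) < m by nlinarith)
  have hnm : n * m ≤ 4 := by
    have := real_inner_mul_inner_self_le α β
    exact_mod_cast (show ((n * m : ℤ) : ℝ) ≤ 4 by push_cast; nlinarith [mul_pos ha hb])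
  rcases Int.eq_one_or_eq_one_or_eq_two_of_mul_le_four hn0 hm0 hnm with rfl | rfl | ⟨rfl, rfl⟩
  · exact Finset.mem_insert_of_mem (hR.sub_mem_of_two_inner_eq hβ hα (by simpa using hn))
  · have := hR.2.1 _ (hR.sub_mem_of_two_inner_eq hα hβ (by rw [real_inner_comm]; simpa using hm))
    exact Finset.mem_insert_of_mem (by simpa using this)
  · -- Equality in Cauchy–Schwarz: `α = β`.
    refine Finset.mem_insert.mpr (Or.inl ((inner_self_eq_zero (𝕜 := ℝ)).mp ?_))
    rw [real_inner_sub_sub_self]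
    push_cast at hn hm
    linarith

lemma inner_eq_zero_of_stronglyOrthogonal (hR : IsCrystRootSet R) (hα : α ∈ R) (hε : ε ∈ R)
    (h : StronglyOrthogonal R α ε) : ⟪α, ε⟫ = 0 := by
  obtain ⟨hadd, hsub⟩ := stronglyOrthogonal_iff.mp h
  refine le_antisymm (not_lt.mp fun hpos => hsub (hR.sub_mem_insert_zero_of_inner_pos hα hε hpos))
    (not_lt.mp fun hneg => hadd ?_)
  simpa using hR.sub_mem_insert_zero_of_inner_pos hα (hR.2.1 ε hε)
    (by rw [inner_neg_right]; linarith)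

lemma add_mem_insert_zero_of_add_add_mem (hR : IsCrystRootSet R) (hα : α ∈ R) (hβ : β ∈ R)
    (hαβ : α + β ∈ R) (hαε : ⟪α, ε⟫ = 0) (hβε : ⟪β, ε⟫ = 0)
    (h : α + β + ε ∈ insert 0 R) : α + ε ∈ insert 0 R ∨ β + ε ∈ insert 0 R := by
  set η := α + β + ε
  have hsum : ⟪η, α⟫ + ⟪η, β⟫ = ⟪α + β, α + β⟫ := by
    simp only [η, ← inner_add_right, inner_add_left _ _ (α + β), inner_add_right ε,
      real_inner_comm α ε, real_inner_comm β ε, hαε, hβε, add_zero]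
  have hpos := hR.inner_self_pos hαβ
  rcases Finset.mem_insert.mp h with h0 | hη
  · simp only [h0, inner_zero_left, add_zero] at hsum
    linarith
  rcases lt_or_ge 0 ⟪η, α⟫ with hηα | hηα
  · right
    have := hR.sub_mem_insert_zero_of_inner_pos hη hα hηα
    rwa [show η - α = β + ε by simp only [η]; abel] at this
  · left
    have := hR.sub_mem_insert_zero_of_inner_pos hη hβ (by linarith)
    rwa [show η - β = α + ε by simp only [η]; abel] at this

lemma stronglyOrthogonal_add (hR : IsCrystRootSet R) (hα : α ∈ R) (hβ : β ∈ R)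
    (hαβ : α + β ∈ R) (hε : ε ∈ R) (hαε : StronglyOrthogonal R α ε)
    (hβε : StronglyOrthogonal R β ε) : StronglyOrthogonal R (α + β) ε := by
  have hα0 := hR.inner_eq_zero_of_stronglyOrthogonal hα hε hαε
  have hβ0 := hR.inner_eq_zero_of_stronglyOrthogonal hβ hε hβε
  obtain ⟨hαε₁, hαε₂⟩ := stronglyOrthogonal_iff.mp hαε
  obtain ⟨hβε₁, hβε₂⟩ := stronglyOrthogonal_iff.mp hβε
  refine stronglyOrthogonal_iff.mpr ⟨fun h => ?_, fun h => ?_⟩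
  · rcases hR.add_mem_insert_zero_of_add_add_mem hα hβ hαβ hα0 hβ0 h with h' | h'
    exacts [hαε₁ h', hβε₁ h']
  · rw [sub_eq_add_neg] at h
    rcases hR.add_mem_insert_zero_of_add_add_mem (ε := -ε) hα hβ hαβ (by simp [hα0])
      (by simp [hβ0]) h with h' | h'
    exacts [hαε₂ (by simpa [sub_eq_add_neg] using h'), hβε₂ (by simpa [sub_eq_add_neg] using h')]

end IsCrystRootSet

section rm

variable [DecidableEq E] {R : Finset E} (r : E → ℤ) {δ ε : E}

lemma le_rm (hε : ε ∈ R) (h : ¬ StronglyOrthogonal R δ ε) : r ε ≤ rm R r δ := by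
  have hle : (r ε : WithBot ℤ) ≤ ((R.filter fun β => ¬ StronglyOrthogonal R δ β).image r).max :=
    Finset.le_max (Finset.mem_image_of_mem r (Finset.mem_filter.mpr ⟨hε, h⟩))
  exact (WithBot.le_unbotD_iff (ne_bot_of_le_ne_bot WithBot.coe_ne_bot hle)).mpr hle

lemma le_rm_self (hδ : δ ∈ R) : r δ ≤ rm R r δ :=
  le_rm r hδ (not_stronglyOrthogonal_self δ)

lemma rm_le (hδ : δ ∈ R) {M : ℤ} (h : ∀ ε ∈ R, ¬ StronglyOrthogonal R δ ε → r ε ≤ M) :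
    rm R r δ ≤ M := by
  refine (WithBot.unbotD_le_iff fun _ => h δ hδ (not_stronglyOrthogonal_self δ)).mpr
    (Finset.max_le fun a ha => ?_)
  obtain ⟨ε, hε, rfl⟩ := Finset.mem_image.mp ha
  obtain ⟨hεR, hεδ⟩ := Finset.mem_filter.mp hε
  exact WithBot.coe_le_coe.mpr (h ε hεR hεδ)

lemma rm_neg_le (hneg : ∀ x ∈ R, -x ∈ R) (hδ : δ ∈ R) : rm R r (-δ) ≤ rm R r δ :=
  rm_le r (hneg δ hδ) fun ε hε h => le_rm r hε (mt (StronglyOrthogonal.neg_left hneg) (by simpa))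

lemma rm_neg (hneg : ∀ x ∈ R, -x ∈ R) (hδ : δ ∈ R) : rm R r (-δ) = rm R r δ :=
  le_antisymm (rm_neg_le r hneg hδ) (by simpa using rm_neg_le r hneg (hneg δ hδ))

lemma rm_add_le_max [InnerProductSpace ℝ E] {α β : E} (hR : IsCrystRootSet R) (hα : α ∈ R)
    (hβ : β ∈ R) (hαβ : α + β ∈ R) : rm R r (α + β) ≤ max (rm R r α) (rm R r β) := by
  refine rm_le r hαβ fun ε hε h => ?_
  by_cases hαε : StronglyOrthogonal R α ε
  · by_cases hβε : StronglyOrthogonal R β ε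
    · exact absurd (hR.stronglyOrthogonal_add hα hβ hαβ hε hαε hβε) h
    · exact (le_rm r hε hβε).trans (le_max_right _ _)
  · exact (le_rm r hε hαε).trans (le_max_left _ _)

lemma nonArch_neg_rm [InnerProductSpace ℝ E] (hR : IsCrystRootSet R) : NonArch R (-rm R r) := by
  refine ⟨fun δ hδ => by simp [rm_neg r hR.2.1 hδ], fun α hα β hβ hαβ => ?_⟩
  simpa [min_neg_neg] using rm_add_le_max r hR hα hβ hαβ

lemma max_le_min_rm (hneg : ∀ x ∈ R, -x ∈ R) {α β γ : E} (hα : α ∈ R) (hβ : β ∈ R)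
    (hγ : γ ∈ R) (hαβ : ¬ StronglyOrthogonal R α β) (hαγ : ¬ StronglyOrthogonal R α γ)
    (hβγ : ¬ StronglyOrthogonal R β γ) :
    max (r α) (max (r β) (r γ)) ≤ min (rm R r α) (min (rm R r β) (rm R r γ)) := by
  have hβα := mt (StronglyOrthogonal.symm hneg) hαβ
  have hγα := mt (StronglyOrthogonal.symm hneg) hαγ
  have hγβ := mt (StronglyOrthogonal.symm hneg) hβγ
  simp only [max_le_iff, le_min_iff]
  exact ⟨⟨le_rm_self r hα, le_rm r hβ hαβ, le_rm r hγ hαγ⟩,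
    ⟨le_rm r hα hβα, le_rm_self r hβ, le_rm r hγ hβγ⟩,
    ⟨le_rm r hα hγα, le_rm r hβ hγβ, le_rm_self r hγ⟩⟩

end rm

/-- The three-root lemma for non-archimedean functions. -/
theorem three_root_lemma (R : Finset V) (hR : IsCrystRootSet R) (r : V → ℤ)
    (hna : NonArch R r) (α β γ : V) (hα : α ∈ R) (hβ : β ∈ R) (hγ : γ ∈ R)
    (hsum : γ = α + β ∨ α = β + γ ∨ β = α + γ) :
    (¬ StronglyOrthogonal R α β ∧ ¬ StronglyOrthogonal R α γ ∧
      ¬ StronglyOrthogonal R β γ) ∧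
    (r α + r β - r γ ≤ max (r α) (max (r β) (r γ))) ∧
    (max (r α) (max (r β) (r γ)) ≤ min (rm R r α) (min (rm R r β) (rm R r γ))) ∧
    (min (rm R r α) (min (rm R r β) (rm R r γ)) ≤ rm R r α + rm R r β - rm R r γ) := by
  have hneg := hR.2.1
  obtain ⟨hαβ, hαγ, hβγ⟩ := not_stronglyOrthogonal_of_sum hneg hα hβ hγ hsum
  have hr := hna.min_le_of_sum hneg hα hβ hγ hsum
  have hrm := (nonArch_neg_rm r hR).min_le_of_sum hneg hα hβ hγ hsum
  simp only [Pi.neg_apply] at hrm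
  exact ⟨⟨hαβ, hαγ, hβγ⟩, by omega, max_le_min_rm r hneg hα hβ hγ hαβ hαγ hβγ, by omega⟩
end

section
/- Let G be a split connected reductive group over the fraction field F of a complete discrete valuation ring 𝔬, with split maximal torus A, Borel B ⊇ A, and root system R. Let k : R → ℤ and consider the 𝔬-lattice 𝔨 = 𝔞(𝔬) ⊕ (⊕_{α∈R} ϖ^{k(α)} 𝔤_α(𝔬)) in 𝔤(F). Then 𝔨 is a Lie subalgebra of 𝔤(F) if and only if k is a concave function, i.e. k(α) + k(β) ≥ k(α+β) whenever α, β, α+β ∈ R, and k(α) + k(−α) ≥ 0 for all α ∈ R. -/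
/-!
The lattice `𝔨` is the `𝔬`-span of the rescaled basis `(h_i, ϖ^{k α} e_α)` of `𝔤(F)`, so it is
closed under the bracket iff the bracket of any two of these vectors has integral coordinates.
If `α + β` is a root, `[ϖ^{k α} e_α, ϖ^{k β} e_β]` is a unit times `ϖ^{k α + k β - k (α + β)}`
times the rescaled vector `ϖ^{k (α + β)} e_{α + β}`; if `β = -α`, it is `ϖ^{k α + k β}` times a
primitive vector of `𝔞(𝔬)`; all other such brackets lie in `𝔨` for free. Since `ϖ` is
irreducible, `ϖ^n u` with `u` a unit lies in `𝔬` exactly when `0 ≤ n`.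
-/

open IsLocalRing Submodule Set

def lieBilinOfIsScalarTower (O F : Type*) {L : Type*} [CommRing O] [Field F] [Algebra O F]
    [LieRing L] [LieAlgebra F L] [Module O L] [IsScalarTower O F L] : L →ₗ[O] L →ₗ[O] L :=
  LinearMap.mk₂ O (fun x y => ⁅x, y⁆) add_lie
    (fun t x y => by rw [← algebraMap_smul F t x, smul_lie, algebraMap_smul]) lie_add
    (fun t x y => by rw [← algebraMap_smul F t y, lie_smul, algebraMap_smul])

theorem forall_lie_mem_span_iff (F : Type*) {O L : Type*} [CommRing O] [Field F] [Algebra O F]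
    [LieRing L] [LieAlgebra F L] [Module O L] [IsScalarTower O F L] (S : Set L) :
    (∀ x ∈ span O S, ∀ y ∈ span O S, ⁅x, y⁆ ∈ span O S) ↔
      ∀ x ∈ S, ∀ y ∈ S, ⁅x, y⁆ ∈ span O S :=
  ⟨fun h x hx y hy => h x (subset_span hx) y (subset_span hy),
    fun h x hx y hy => LinearMap.BilinMap.apply_apply_mem_of_mem_span _ S S
      (lieBilinOfIsScalarTower O F) h x y hx hy⟩

section IntegralCoordinates

variable {O F L : Type*} [CommRing O] [IsDomain O] [Field F] [Algebra O F] [IsFractionRing O F]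
  [AddCommGroup L] [Module F L] [Module O L] [IsScalarTower O F L]

theorem Module.Basis.smul_mem_span_range_iff {S : Type*} (B : Module.Basis S F L) (a : F)
    (s : S) : a • B s ∈ span O (range B) ↔ a ∈ range (algebraMap O F) := by
  classical
  rw [B.mem_span_iff_repr_mem O]
  refine ⟨fun h => by simpa using h s, fun h t => ?_⟩
  rcases eq_or_ne s t with rfl | hst
  · simp [h]
  · simp [hst]

theorem Module.Basis.sum_smul_inl_mem_span_range_iff {ι κ : Type*} [Fintype ι]
    (B : Module.Basis (ι ⊕ κ) F L) (a : ι → F) :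
    ∑ i, a i • B (Sum.inl i) ∈ span O (range B) ↔
      ∀ i, a i ∈ range (algebraMap O F) := by
  classical
  rw [B.mem_span_iff_repr_mem O, Sum.forall]
  simp [Finsupp.single_apply]

end IntegralCoordinates

section Valuation

variable {O F : Type*} [CommRing O] [Field F] [Algebra O F]

theorem zpow_mul_algebraMap_mem_range (ϖ : O) {n : ℤ} (hn : 0 ≤ n) (c : O) :
    algebraMap O F ϖ ^ n * algebraMap O F c ∈ range (algebraMap O F) := by
  lift n to ℕ using hn
  exact ⟨ϖ ^ n * c, by simp⟩

theorem zpow_mul_algebraMap_mem_range_iff [IsFractionRing O F] {ϖ : O} (hϖ : Irreducible ϖ)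
    {u : O} (hu : IsUnit u) (n : ℤ) :
    algebraMap O F ϖ ^ n * algebraMap O F u ∈ range (algebraMap O F) ↔ 0 ≤ n := by
  refine ⟨fun ⟨d, hd⟩ => ?_, fun hn => zpow_mul_algebraMap_mem_range ϖ hn u⟩
  by_contra! hn
  obtain ⟨m, rfl⟩ := Int.exists_eq_neg_ofNat hn.le
  have hm : m ≠ 0 := by omega
  have hϖ0 : algebraMap O F ϖ ≠ 0 :=
    (map_ne_zero_iff _ (IsFractionRing.injective O F)).2 hϖ.ne_zero
  have hu_eq : u = ϖ ^ m * d := IsFractionRing.injective O F <| by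
    rw [map_mul, map_pow, hd, zpow_neg, zpow_natCast, ← mul_assoc,
      mul_inv_cancel₀ (pow_ne_zero m hϖ0), one_mul]
  exact hϖ.not_isUnit <|
    isUnit_of_dvd_unit (hu_eq ▸ dvd_mul_of_dvd_left (dvd_pow_self ϖ hm) d) hu

end Valuation

namespace Module.Basis

variable {F L ι κ : Type*} [Field F] [AddCommGroup L] [Module F L]

noncomputable def zpowSMulInr (b : Module.Basis (ι ⊕ κ) F L) (π : Fˣ) (k : κ → ℤ) :
    Module.Basis (ι ⊕ κ) F L :=
  b.unitsSMul (Sum.elim 1 fun α => π ^ k α)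

variable (b : Module.Basis (ι ⊕ κ) F L) (π : Fˣ) (k : κ → ℤ)

@[simp]
theorem zpowSMulInr_inl (i : ι) : b.zpowSMulInr π k (Sum.inl i) = b (Sum.inl i) := by
  simp [zpowSMulInr, unitsSMul_apply]

@[simp]
theorem zpowSMulInr_inr (α : κ) :
    b.zpowSMulInr π k (Sum.inr α) = (π : F) ^ k α • b (Sum.inr α) := by
  simp [zpowSMulInr, unitsSMul_apply, Units.smul_def]

end Module.Basis

theorem span_range_inl_sup_iSup_span_inr {O L ι κ : Type*} [CommRing O] [AddCommGroup L]
    [Module O L] (v : ι ⊕ κ → L) :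
    span O (range fun i => v (Sum.inl i)) ⊔ ⨆ α, span O {v (Sum.inr α)} =
      span O (range v) := by
  rw [← Sum.elim_comp_inl_inr v, Set.Sum.elim_range, span_union,
    span_range_eq_iSup (v := v ∘ Sum.inr)]
  rfl

section RescaledBracket

variable {O F L ι κ : Type*} [CommRing O] [Field F] [Algebra O F] [LieRing L] [LieAlgebra F L]
  [Module O L] [IsScalarTower O F L] (b : Module.Basis (ι ⊕ κ) F L) (π : Fˣ) (k : κ → ℤ)

theorem lie_zpowSMulInr_inl_inr_mem_span (i : ι) (α : κ) (c : O)
    (hc : ⁅b (Sum.inl i), b (Sum.inr α)⁆ = algebraMap O F c • b (Sum.inr α)) :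
    ⁅b.zpowSMulInr π k (Sum.inl i), b.zpowSMulInr π k (Sum.inr α)⁆ ∈
      span O (range (b.zpowSMulInr π k)) := by
  rw [b.zpowSMulInr_inl, b.zpowSMulInr_inr, lie_smul, hc, smul_comm, ← b.zpowSMulInr_inr,
    algebraMap_smul]
  exact smul_mem _ c (subset_span (mem_range_self _))

theorem lie_zpowSMulInr_inr_inr_mem_span_iff_of_eq_sum_inl [IsDomain O] [IsFractionRing O F]
    [Fintype ι] {ϖ : O} (hϖ : Irreducible ϖ) (hπ : (π : F) = algebraMap O F ϖ) (α β : κ)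
    (c : ι → O)
    (hc : ⁅b (Sum.inr α), b (Sum.inr β)⁆ = ∑ i, algebraMap O F (c i) • b (Sum.inl i))
    (hunit : ∃ i, IsUnit (c i)) :
    ⁅b.zpowSMulInr π k (Sum.inr α), b.zpowSMulInr π k (Sum.inr β)⁆ ∈
      span O (range (b.zpowSMulInr π k)) ↔ 0 ≤ k α + k β := by
  have hbr : ⁅b.zpowSMulInr π k (Sum.inr α), b.zpowSMulInr π k (Sum.inr β)⁆ =
      ∑ i, ((π : F) ^ (k α + k β) * algebraMap O F (c i)) •
        b.zpowSMulInr π k (Sum.inl i) := by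
    simp only [b.zpowSMulInr_inr, b.zpowSMulInr_inl, smul_lie, lie_smul, hc, Finset.smul_sum,
      smul_smul, zpow_add₀ π.ne_zero, mul_assoc, mul_left_comm]
  rw [hbr, Module.Basis.sum_smul_inl_mem_span_range_iff, hπ]
  obtain ⟨i, hi⟩ := hunit
  exact ⟨fun h => (zpow_mul_algebraMap_mem_range_iff hϖ hi _).1 (h i),
    fun h j => zpow_mul_algebraMap_mem_range ϖ h (c j)⟩

end RescaledBracket

theorem lie_zpowSMulInr_inr_inr_mem_span_iff_of_add_mem {O F L M ι : Type*} [CommRing O]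
    [IsDomain O] [Field F] [Algebra O F] [IsFractionRing O F] [LieRing L] [LieAlgebra F L]
    [Module O L] [IsScalarTower O F L] [AddCommGroup M] {R : Finset M}
    (b : Module.Basis (ι ⊕ R) F L) {π : Fˣ} {ϖ : O} (hϖ : Irreducible ϖ)
    (hπ : (π : F) = algebraMap O F ϖ) (k : R → ℤ) {α β : R} (hαβ : (α : M) + β ∈ R)
    (c : Oˣ)
    (hc : ⁅b (Sum.inr α), b (Sum.inr β)⁆ =
      algebraMap O F (c : O) • b (Sum.inr ⟨(α : M) + β, hαβ⟩)) :
    ⁅b.zpowSMulInr π k (Sum.inr α), b.zpowSMulInr π k (Sum.inr β)⁆ ∈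
      span O (range (b.zpowSMulInr π k)) ↔ k ⟨(α : M) + β, hαβ⟩ ≤ k α + k β := by
  have hπ0 : (π : F) ≠ 0 := π.ne_zero
  have hbr : ⁅b.zpowSMulInr π k (Sum.inr α), b.zpowSMulInr π k (Sum.inr β)⁆ =
      ((π : F) ^ (k α + k β - k ⟨(α : M) + β, hαβ⟩) * algebraMap O F c) •
        b.zpowSMulInr π k (Sum.inr ⟨(α : M) + β, hαβ⟩) := by
    rw [b.zpowSMulInr_inr, b.zpowSMulInr_inr, b.zpowSMulInr_inr, smul_lie, lie_smul, hc,
      smul_smul, smul_smul, smul_smul, zpow_sub₀ hπ0, zpow_add₀ hπ0]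
    field_simp
  rw [hbr, Module.Basis.smul_mem_span_range_iff, hπ,
    zpow_mul_algebraMap_mem_range_iff hϖ c.isUnit]
  omega

theorem lattice_subalgebra_iff_concave_general
    (O : Type*) [CommRing O] [IsDomain O]
    (F : Type*) [Field F] [Algebra O F] [IsFractionRing O F]
    (ϖ : O) (hϖ : Irreducible ϖ)
    -- the root system, as a finite symmetric subset of an abelian group:
    (M : Type*) [AddCommGroup M] (R : Finset M)
    -- the Lie algebra over `F`, with its root space decomposition given by a
    -- basis: `b (Sum.inl i)` is an `𝔬`-basis of `𝔞(𝔬)`, and `b (Sum.inr α)`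
    -- is an `𝔬`-generator of the root space `𝔤_α(𝔬)`:
    (L : Type*) [LieRing L] [LieAlgebra F L]
    [Module O L] [IsScalarTower O F L]
    (ι : Type*) [Fintype ι]
    (b : Module.Basis (ι ⊕ {α : M // α ∈ R}) F L)
    -- `𝔞` is abelian:
    (h_aa : ∀ i j : ι, ⁅b (Sum.inl i), b (Sum.inl j)⁆ = (0 : L))
    -- `[𝔞(𝔬), 𝔤_α(𝔬)] ⊆ 𝔤_α(𝔬)`:
    (h_ae : ∀ (i : ι) (α : {α : M // α ∈ R}), ∃ c : O,
      ⁅b (Sum.inl i), b (Sum.inr α)⁆ = algebraMap O F c • b (Sum.inr α))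
    -- `[𝔤_α, 𝔤_β] = 𝔤_{α+β}` when `α + β ∈ R`, with unit structure constant:
    (h_sum : ∀ α β : {α : M // α ∈ R}, ∀ h : (α : M) + (β : M) ∈ R, ∃ c : Oˣ,
      ⁅b (Sum.inr α), b (Sum.inr β)⁆ =
        algebraMap O F (c : O) • b (Sum.inr ⟨(α : M) + (β : M), h⟩))
    -- `[𝔤_α, 𝔤_{-α}] = 𝔬 H_α` with `H_α ∈ 𝔞(𝔬)` primitive:
    (h_opp : ∀ α β : {α : M // α ∈ R}, (α : M) + (β : M) = 0 → ∃ c : ι → O,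
      ⁅b (Sum.inr α), b (Sum.inr β)⁆ =
        ∑ i : ι, algebraMap O F (c i) • b (Sum.inl i) ∧ ∃ i : ι, IsUnit (c i))
    -- `[𝔤_α, 𝔤_β] = 0` when `α + β ∉ R ∪ {0}`:
    (h_zero : ∀ α β : {α : M // α ∈ R}, (α : M) + (β : M) ≠ 0 →
      (α : M) + (β : M) ∉ R → ⁅b (Sum.inr α), b (Sum.inr β)⁆ = (0 : L))
    (k : {α : M // α ∈ R} → ℤ) :
    (∀ x ∈ (Submodule.span O (Set.range fun i : ι => b (Sum.inl i)) ⊔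
        ⨆ α : {α : M // α ∈ R}, Submodule.span O
          {((algebraMap O F ϖ) ^ (k α) : F) • b (Sum.inr α)} : Submodule O L),
      ∀ y ∈ (Submodule.span O (Set.range fun i : ι => b (Sum.inl i)) ⊔
        ⨆ α : {α : M // α ∈ R}, Submodule.span O
          {((algebraMap O F ϖ) ^ (k α) : F) • b (Sum.inr α)} : Submodule O L),
        ⁅x, y⁆ ∈ (Submodule.span O (Set.range fun i : ι => b (Sum.inl i)) ⊔
        ⨆ α : {α : M // α ∈ R}, Submodule.span O
          {((algebraMap O F ϖ) ^ (k α) : F) • b (Sum.inr α)} : Submodule O L))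
    ↔ ((∀ α β : {α : M // α ∈ R}, ∀ h : (α : M) + (β : M) ∈ R,
          k ⟨(α : M) + (β : M), h⟩ ≤ k α + k β) ∧
        (∀ α : {α : M // α ∈ R}, ∀ h : -(α : M) ∈ R,
          0 ≤ k α + k ⟨-(α : M), h⟩)) := by
  obtain ⟨π, hπ⟩ : IsUnit (algebraMap O F ϖ) :=
    isUnit_iff_ne_zero.2 ((map_ne_zero_iff _ (IsFractionRing.injective O F)).2 hϖ.ne_zero)
  set B := b.zpowSMulInr π k
  have hK : (Submodule.span O (Set.range fun i : ι => b (Sum.inl i)) ⊔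
      ⨆ α : {α : M // α ∈ R}, Submodule.span O
        {((algebraMap O F ϖ) ^ (k α) : F) • b (Sum.inr α)} : Submodule O L) =
      span O (range B) := by
    simpa [B, hπ] using span_range_inl_sup_iSup_span_inr (O := O) B
  simp only [hK, forall_lie_mem_span_iff F, Set.forall_mem_range]
  constructor
  · intro hB
    refine ⟨fun α β hαβ => ?_, fun α hα => ?_⟩
    · obtain ⟨c, hc⟩ := h_sum α β hαβ
      exact (lie_zpowSMulInr_inr_inr_mem_span_iff_of_add_mem b hϖ hπ k hαβ c hc).1 (hB _ _)
    · obtain ⟨c, hc, hunit⟩ := h_opp α ⟨-(α : M), hα⟩ (add_neg_cancel _)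
      exact (lie_zpowSMulInr_inr_inr_mem_span_iff_of_eq_sum_inl b π k hϖ hπ _ _ c hc hunit).1
        (hB _ _)
  · rintro ⟨hsum, hopp⟩ (i | α) (j | β)
    · simp [B, h_aa]
    · obtain ⟨c, hc⟩ := h_ae i β
      exact lie_zpowSMulInr_inl_inr_mem_span b π k i β c hc
    · obtain ⟨c, hc⟩ := h_ae j α
      rw [← lie_skew]
      exact neg_mem (lie_zpowSMulInr_inl_inr_mem_span b π k j α c hc)
    · by_cases hR : (α : M) + β ∈ R
      · obtain ⟨c, hc⟩ := h_sum α β hR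
        exact (lie_zpowSMulInr_inr_inr_mem_span_iff_of_add_mem b hϖ hπ k hR c hc).2
          (hsum α β hR)
      by_cases h0 : (α : M) + β = 0
      · have hβ : -(α : M) ∈ R := eq_neg_of_add_eq_zero_right h0 ▸ β.2
        obtain rfl : β = ⟨-(α : M), hβ⟩ := Subtype.ext (eq_neg_of_add_eq_zero_right h0)
        obtain ⟨c, hc, hunit⟩ := h_opp α _ h0
        exact (lie_zpowSMulInr_inr_inr_mem_span_iff_of_eq_sum_inl b π k hϖ hπ _ _ c hc hunit).2
          (hopp α _)
      · simp [B, h_zero α β h0 hR]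

/-- Bruhat–Tits' criterion: for a split reductive Lie algebra
`𝔤(F) = 𝔞(F) ⊕ ⊕_{α∈R} 𝔤_α(F)` over the fraction field `F` of a complete
discrete valuation ring `𝔬` (encoded by a basis `b` of `L` consisting of a
basis of `𝔞` indexed by `ι` together with Chevalley root vectors indexed by
the roots, with the usual bracket relations), the `𝔬`-lattice
`𝔨 = 𝔞(𝔬) ⊕ ⊕_{α∈R} ϖ^{k(α)} 𝔤_α(𝔬)` is a Lie subalgebra of `𝔤(F)` if and
only if `k` is a concave function. -/
theorem lattice_subalgebra_iff_concave
    (O : Type*) [CommRing O] [IsDomain O] [IsDiscreteValuationRing O]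
    [IsAdicComplete (maximalIdeal O) O]
    (F : Type*) [Field F] [Algebra O F] [IsFractionRing O F]
    (ϖ : O) (hϖ : Irreducible ϖ)
    -- the root system, as a finite symmetric subset of an abelian group:
    (M : Type*) [AddCommGroup M] (R : Finset M) (h0R : (0 : M) ∉ R)
    (hsym : ∀ α ∈ R, -α ∈ R)
    -- the Lie algebra over `F`, with its root space decomposition given by a
    -- basis: `b (Sum.inl i)` is an `𝔬`-basis of `𝔞(𝔬)`, and `b (Sum.inr α)`
    -- is an `𝔬`-generator of the root space `𝔤_α(𝔬)`:
    (L : Type*) [LieRing L] [LieAlgebra F L]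
    [Module O L] [IsScalarTower O F L]
    (ι : Type*) [Fintype ι]
    (b : Module.Basis (ι ⊕ {α : M // α ∈ R}) F L)
    -- `𝔞` is abelian:
    (h_aa : ∀ i j : ι, ⁅b (Sum.inl i), b (Sum.inl j)⁆ = (0 : L))
    -- `[𝔞(𝔬), 𝔤_α(𝔬)] ⊆ 𝔤_α(𝔬)`:
    (h_ae : ∀ (i : ι) (α : {α : M // α ∈ R}), ∃ c : O,
      ⁅b (Sum.inl i), b (Sum.inr α)⁆ = algebraMap O F c • b (Sum.inr α))
    -- `[𝔤_α, 𝔤_β] = 𝔤_{α+β}` when `α + β ∈ R`, with unit structure constant: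
    (h_sum : ∀ α β : {α : M // α ∈ R}, ∀ h : (α : M) + (β : M) ∈ R, ∃ c : Oˣ,
      ⁅b (Sum.inr α), b (Sum.inr β)⁆ =
        algebraMap O F (c : O) • b (Sum.inr ⟨(α : M) + (β : M), h⟩))
    -- `[𝔤_α, 𝔤_{-α}] = 𝔬 H_α` with `H_α ∈ 𝔞(𝔬)` primitive:
    (h_opp : ∀ α β : {α : M // α ∈ R}, (α : M) + (β : M) = 0 → ∃ c : ι → O,
      ⁅b (Sum.inr α), b (Sum.inr β)⁆ =
        ∑ i : ι, algebraMap O F (c i) • b (Sum.inl i) ∧ ∃ i : ι, IsUnit (c i))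
    -- `[𝔤_α, 𝔤_β] = 0` when `α + β ∉ R ∪ {0}`:
    (h_zero : ∀ α β : {α : M // α ∈ R}, (α : M) + (β : M) ≠ 0 →
      (α : M) + (β : M) ∉ R → ⁅b (Sum.inr α), b (Sum.inr β)⁆ = (0 : L))
    (k : {α : M // α ∈ R} → ℤ) :
    (∀ x ∈ (Submodule.span O (Set.range fun i : ι => b (Sum.inl i)) ⊔
        ⨆ α : {α : M // α ∈ R}, Submodule.span O
          {((algebraMap O F ϖ) ^ (k α) : F) • b (Sum.inr α)} : Submodule O L),
      ∀ y ∈ (Submodule.span O (Set.range fun i : ι => b (Sum.inl i)) ⊔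
        ⨆ α : {α : M // α ∈ R}, Submodule.span O
          {((algebraMap O F ϖ) ^ (k α) : F) • b (Sum.inr α)} : Submodule O L),
        ⁅x, y⁆ ∈ (Submodule.span O (Set.range fun i : ι => b (Sum.inl i)) ⊔
        ⨆ α : {α : M // α ∈ R}, Submodule.span O
          {((algebraMap O F ϖ) ^ (k α) : F) • b (Sum.inr α)} : Submodule O L))
    ↔ ((∀ α β : {α : M // α ∈ R}, ∀ h : (α : M) + (β : M) ∈ R,
          k ⟨(α : M) + (β : M), h⟩ ≤ k α + k β) ∧
        (∀ α : {α : M // α ∈ R}, ∀ h : -(α : M) ∈ R,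
          0 ≤ k α + k ⟨-(α : M), h⟩)) :=
  lattice_subalgebra_iff_concave_general O F ϖ hϖ M R L ι b h_aa h_ae h_sum h_opp h_zero k
end
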